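/- For every finite sum u(t) = Σ_{k=0}^{N} u_k sin((π/2 + kπ)t/T) with real coefficients, the inner product ⟨u, H_T u⟩_{L²(0,T)} = ∫₀ᵀ u(t) · (Σ_{k=0}^{N} u_k cos((π/2 + kπ)t/T)) dt is nonnegative. -/

import Mathlib

open Real intervalIntegral Finset

/-!
With `a_k(t) = (π/2 + kπ) t / T`, symmetrizing the double sum turns `sin a_j cos a_k` into
`sin (a_j + a_k) / 2`, and `a_j + a_k = (j + k + 1) π t / T`. The integral of that sine over
`[0, T]` is `(T/π) ∫_{-1}^{1} x^(j+k) dx`, so the quadratic form equals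
`(T/2π) ∫_{-1}^{1} p(x)^2 dx` with `p(x) = ∑ u_k x^k`.
-/

theorem sum_mul_sin_mul_sum_mul_cos {ι : Type*} (s : Finset ι) (u a : ι → ℝ) :
    (∑ k ∈ s, u k * sin (a k)) * (∑ k ∈ s, u k * cos (a k)) =
      (∑ j ∈ s, ∑ k ∈ s, u j * u k * sin (a j + a k)) / 2 := by
  have hswap : ∑ j ∈ s, ∑ k ∈ s, u j * u k * (cos (a j) * sin (a k)) =
      ∑ j ∈ s, ∑ k ∈ s, u j * u k * (sin (a j) * cos (a k)) := by
    rw [sum_comm]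
    exact sum_congr rfl fun _ _ => sum_congr rfl fun _ _ => by ring
  simp_rw [sin_add, mul_add, sum_add_distrib, hswap, add_self_div_two, sum_mul_sum]
  exact sum_congr rfl fun _ _ => sum_congr rfl fun _ _ => by ring

theorem integral_sum_sum_const_mul {ι : Type*} {a b : ℝ} (s : Finset ι) (c : ι → ι → ℝ)
    (g : ι → ι → ℝ → ℝ) (hg : ∀ j k, IntervalIntegrable (g j k) MeasureTheory.volume a b) :
    ∫ x in a..b, ∑ j ∈ s, ∑ k ∈ s, c j k * g j k x =
      ∑ j ∈ s, ∑ k ∈ s, c j k * ∫ x in a..b, g j k x := by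
  have hrow : ∀ j,
      IntervalIntegrable (fun x => ∑ k ∈ s, c j k * g j k x) MeasureTheory.volume a b := fun j => by
      simpa only [← sum_fn] using IntervalIntegrable.sum s fun k _ => (hg j k).const_mul (c j k)
  rw [integral_finsetSum fun j _ => hrow j]
  refine sum_congr rfl fun j _ => ?_
  rw [integral_finsetSum (f := fun k x => c j k * g j k x) fun k _ => (hg j k).const_mul _]
  simp only [integral_const_mul]

theorem sum_sum_mul_integral_mul_nonneg {ι : Type*} {a b : ℝ} (hab : a ≤ b) (s : Finset ι)
    (u : ι → ℝ) (f : ι → ℝ → ℝ) (hf : ∀ j, Continuous (f j)) :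
    0 ≤ ∑ j ∈ s, ∑ k ∈ s, u j * u k * ∫ x in a..b, f j x * f k x := by
  rw [← integral_sum_sum_const_mul s _ (fun j k x => f j x * f k x)
    fun j k => ((hf j).mul (hf k)).intervalIntegrable a b]
  refine integral_nonneg hab fun x _ => ?_
  calc (0 : ℝ) ≤ (∑ j ∈ s, u j * f j x) ^ 2 := sq_nonneg _
    _ = _ := by
      rw [sq, sum_mul_sum]
      exact sum_congr rfl fun _ _ => sum_congr rfl fun _ _ => by ring

theorem integral_sin_nat_succ_mul_pi_mul_div (T : ℝ) (n : ℕ) :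
    ∫ t in (0:ℝ)..T, sin ((n + 1) * π * t / T) = T / π * ∫ x in (-1:ℝ)..1, x ^ n := by
  rcases eq_or_ne T 0 with rfl | hT
  · simp
  have hc : ((n : ℝ) + 1) * π ≠ 0 := by positivity
  have hcos : cos ((n + 1) * π) = -(-1) ^ n := by
    simpa [pow_succ] using cos_nat_mul_pi (n + 1)
  simp_rw [mul_div_assoc]
  rw [integral_comp_div (fun x => sin ((n + 1) * π * x)) hT, zero_div, div_self hT,
    integral_comp_mul_left (fun x => sin x) hc, integral_sin, integral_pow, mul_zero, mul_one,
    cos_zero, hcos]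
  simp only [smul_eq_mul]
  field_simp
  ring

/-- Positivity of the modified Hilbert transform: for every finite sine series `u`,
`⟨u, H_T u⟩_{L²(0,T)} ≥ 0`. -/
theorem modified_hilbert_nonneg (T : ℝ) (hT : 0 < T) (N : ℕ) (u : ℕ → ℝ) :
    0 ≤ ∫ t in (0:ℝ)..T,
        (∑ k ∈ Finset.range (N + 1), u k * Real.sin ((π / 2 + k * π) * t / T)) *
        (∑ k ∈ Finset.range (N + 1), u k * Real.cos ((π / 2 + k * π) * t / T)) := by
  have hangle : ∀ (j k : ℕ) (t : ℝ), (π / 2 + j * π) * t / T + (π / 2 + k * π) * t / T =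
      ((j + k : ℕ) + 1) * π * t / T := fun j k t => by push_cast; ring
  simp_rw [sum_mul_sin_mul_sum_mul_cos, hangle]
  rw [intervalIntegral.integral_div, integral_sum_sum_const_mul _ _ _
    fun j k => by apply Continuous.intervalIntegrable; fun_prop]
  simp_rw [integral_sin_nat_succ_mul_pi_mul_div, pow_add, mul_left_comm _ (T / π), ← mul_sum]
  have hgram := sum_sum_mul_integral_mul_nonneg (by norm_num : (-1:ℝ) ≤ 1) (range (N + 1)) u
    (fun j x => x ^ j) continuous_pow
  exact div_nonneg (mul_nonneg (div_nonneg hT.le pi_pos.le) hgram) zero_le_two
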